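/- Let P₁ = {u ∈ ℝⁿ : A¹u ≥ b¹} and P₂ = {u ∈ ℝⁿ : A²u ≥ b²} be nonempty polyhedra. An inequality γᵀu ≥ γ₀ is valid for P₁ ∪ P₂ (equivalently for conv(P₁ ∪ P₂)) if and only if there exist nonnegative multipliers β¹, β² with (A¹)ᵀβ¹ = γ, (A²)ᵀβ² = γ, (b¹)ᵀβ¹ ≥ γ₀, and (b²)ᵀβ² ≥ γ₀. -/

import Mathlib

/-!
Multipliers as in the statement certify `γ ⬝ᵥ u ≥ γ₀` on each `Pᵣ` by weak duality:
`γ ⬝ᵥ u = βʳ ⬝ᵥ Aʳ u ≥ βʳ ⬝ᵥ bʳ ≥ γ₀`. Conversely, validity on the union means validity on each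
`Pᵣ`, and the affine Farkas lemma produces the multipliers for each polyhedron separately.

The affine Farkas lemma is reduced to the homogeneous one by homogenization: since `P` is
nonempty, `γ ⬝ᵥ u ≥ t γ₀` whenever `A u ≥ t b` and `t ≥ 0` (for `t = 0`, `u` is a recession
direction of `P`). The homogeneous Farkas lemma is hyperplane separation from a finitely
generated cone, which is closed: by the conic Carathéodory theorem it is a finite union of images
of closed orthants under injective linear maps.
-/

open Matrix

section ConicCaratheodory

variable {𝕜 E ι : Type*} [Field 𝕜] [LinearOrder 𝕜] [IsStrictOrderedRing 𝕜]
  [AddCommGroup E] [Module 𝕜 E] {v : ι → E}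

lemma exists_nonneg_sum_erase_eq_of_not_linearIndepOn [DecidableEq ι] {s : Finset ι}
    (hs : ¬LinearIndepOn 𝕜 v (s : Set ι)) {c : ι → 𝕜} (hc : ∀ i ∈ s, 0 ≤ c i) :
    ∃ j ∈ s, ∃ c' : ι → 𝕜, (∀ i ∈ s, 0 ≤ c' i) ∧
      ∑ i ∈ s.erase j, c' i • v i = ∑ i ∈ s, c i • v i := by
  obtain ⟨g, hg, hpos⟩ : ∃ g : ι → 𝕜, ∑ i ∈ s, g i • v i = 0 ∧ (s.filter (0 < g ·)).Nonempty := by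
    obtain ⟨g, hg, i, hi, hgi⟩ := not_linearIndepOn_finset_iff.mp hs
    rcases hgi.lt_or_gt with hgi | hgi
    · exact ⟨-g, by simp [neg_smul, hg], i, by simpa [hi] using hgi⟩
    · exact ⟨g, hg, i, by simpa [hi] using hgi⟩
  -- the largest step `t` along `-g` that keeps the coefficients nonnegative kills the one at `j`
  obtain ⟨j, hj, hmin⟩ := Finset.exists_min_image _ (fun i => c i / g i) hpos
  rw [Finset.mem_filter] at hj
  set t := c j / g j
  have ht : 0 ≤ t := div_nonneg (hc j hj.1) hj.2.le
  refine ⟨j, hj.1, fun i => c i - t * g i, fun i hi => ?_, ?_⟩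
  · rcases lt_or_ge 0 (g i) with hgi | hgi
    · have := (le_div_iff₀ hgi).mp (hmin i (Finset.mem_filter.mpr ⟨hi, hgi⟩))
      linarith
    · nlinarith [hc i hi]
  · rw [Finset.sum_erase _ (by simp [t, div_mul_cancel₀ _ hj.2.ne'])]
    simp only [sub_smul, Finset.sum_sub_distrib, mul_smul, ← Finset.smul_sum, hg, smul_zero,
      sub_zero]

theorem exists_linearIndepOn_nonneg_sum_eq (s : Finset ι) (c : ι → 𝕜) (hc : ∀ i ∈ s, 0 ≤ c i) :
    ∃ t ⊆ s, LinearIndepOn 𝕜 v (t : Set ι) ∧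
      ∃ d : ι → 𝕜, (∀ i ∈ t, 0 ≤ d i) ∧ ∑ i ∈ t, d i • v i = ∑ i ∈ s, c i • v i := by
  classical
  induction s using Finset.strongInduction generalizing c with
  | H s ih =>
  by_cases hs : LinearIndepOn 𝕜 v (s : Set ι)
  · exact ⟨s, subset_rfl, hs, c, hc, rfl⟩
  obtain ⟨j, hj, c', hc', hsum⟩ := exists_nonneg_sum_erase_eq_of_not_linearIndepOn hs hc
  obtain ⟨t, hts, ht, d, hd, hsum'⟩ :=
    ih _ (Finset.erase_ssubset hj) c' fun i hi => hc' i (Finset.mem_of_mem_erase hi)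
  exact ⟨t, hts.trans (s.erase_subset j), ht, d, hd, hsum'.trans hsum⟩

end ConicCaratheodory

section Farkas

open PointedCone

variable {E ι : Type*} [Fintype ι] [AddCommGroup E] [Module ℝ E]

def generatedCone (v : ι → E) : PointedCone ℝ E :=
  (positive ℝ (ι → ℝ)).map (Fintype.linearCombination ℝ v)

lemma mem_generatedCone {v : ι → E} {x : E} :
    x ∈ generatedCone v ↔ ∃ c : ι → ℝ, 0 ≤ c ∧ ∑ i, c i • v i = x := by
  simp [generatedCone, PointedCone.mem_map, Fintype.linearCombination_apply]

lemma sum_smul_mem_generatedCone_of_subtype {v : ι → E} (t : Finset ι) {d : t → ℝ} (hd : 0 ≤ d) :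
    ∑ i : t, d i • v i ∈ generatedCone v := by
  classical
  refine mem_generatedCone.mpr ⟨fun i => if h : i ∈ t then d ⟨i, h⟩ else 0, fun i => ?_, ?_⟩
  · dsimp only; split_ifs; exacts [hd _, le_rfl]
  · rw [← Finset.sum_subset t.subset_univ (fun i _ hi => by simp [hi]), ← Finset.sum_coe_sort t]
    simp

variable [TopologicalSpace E] [IsTopologicalAddGroup E] [ContinuousSMul ℝ E]

theorem isClosed_generatedCone [T2Space E] (v : ι → E) : IsClosed (generatedCone v : Set E) := by
  classical
  have hunion : (generatedCone v : Set E) = ⋃ t ∈ {t : Finset ι | LinearIndepOn ℝ v (t : Set ι)},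
      Fintype.linearCombination ℝ (fun i : t => v i) '' Set.Ici 0 := by
    refine subset_antisymm ?_ (Set.iUnion₂_subset fun t _ => ?_)
    · rintro x hx
      obtain ⟨c, hc, rfl⟩ := mem_generatedCone.mp hx
      obtain ⟨t, -, ht, d, hd, hsum⟩ :=
        exists_linearIndepOn_nonneg_sum_eq (v := v) Finset.univ c fun i _ => hc i
      refine Set.mem_biUnion ht ⟨fun i => d i, fun i => hd i i.2, ?_⟩
      rw [Fintype.linearCombination_apply, Finset.sum_coe_sort t (fun i => d i • v i), hsum]
    · rintro _ ⟨d, hd, rfl⟩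
      rw [Fintype.linearCombination_apply]
      exact sum_smul_mem_generatedCone_of_subtype t hd
  rw [hunion]
  refine (Set.toFinite _).isClosed_biUnion fun t ht => ?_
  exact (LinearMap.isClosedEmbedding_of_injective
    (LinearMap.ker_eq_bot.mpr ht.fintypeLinearCombination_injective)).isClosedMap _ isClosed_Ici

theorem exists_nonneg_sum_smul_eq_of_forall_strongDual [T2Space E] [LocallyConvexSpace ℝ E]
    {v : ι → E} {x : E} (h : ∀ f : StrongDual ℝ E, (∀ i, 0 ≤ f (v i)) → 0 ≤ f x) :
    ∃ c : ι → ℝ, 0 ≤ c ∧ ∑ i, c i • v i = x := by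
  classical
  rw [← mem_generatedCone]
  by_contra hx
  obtain ⟨f, hf, hfx⟩ :=
    ProperCone.hyperplane_separation_point ⟨generatedCone v, isClosed_generatedCone v⟩ hx
  refine hfx.not_ge (h f fun i => hf _ (mem_generatedCone.mpr ⟨Pi.single i 1, ?_, ?_⟩))
  · exact Pi.single_nonneg.mpr zero_le_one
  · simp [Pi.single_apply, ite_smul]

end Farkas

theorem Matrix.exists_nonneg_transpose_mulVec_eq {m n : Type*} [Fintype m] [Fintype n]
    (B : Matrix m n ℝ) (c : n → ℝ) (h : ∀ x, 0 ≤ B *ᵥ x → 0 ≤ c ⬝ᵥ x) :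
    ∃ y, 0 ≤ y ∧ Bᵀ *ᵥ y = c := by
  classical
  obtain ⟨y, hy, hsum⟩ :=
    exists_nonneg_sum_smul_eq_of_forall_strongDual (v := fun i => B i) (x := c) fun f hf => by
      obtain ⟨w, hw⟩ : ∃ w : n → ℝ, ∀ u, f u = w ⬝ᵥ u :=
        ⟨_, fun u => (LinearMap.congr_fun ((dotProductEquiv ℝ n).apply_symm_apply f) u).symm⟩
      rw [hw, dotProduct_comm]
      exact h w fun i => by simpa [hw, mulVec, dotProduct_comm] using hf i
  exact ⟨y, hy, by rw [mulVec_transpose, vecMul_eq_sum, hsum]⟩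

section Homogenization

variable {R m n : Type*} [CommRing R] (A : Matrix m n R) (b : m → R)

/-- The cone `{(u, t) | t • b ≤ A *ᵥ u, 0 ≤ t}` is `{x | 0 ≤ homogenization A b *ᵥ x}`. -/
def homogenization : Matrix (m ⊕ Unit) (n ⊕ Unit) R :=
  fromBlocks A (replicateCol Unit (-b)) 0 1

lemma homogenization_mulVec_inl [Fintype n] (x : n ⊕ Unit → R) (i : m) :
    (homogenization A b *ᵥ x) (Sum.inl i) = (A *ᵥ (x ∘ Sum.inl)) i - x (Sum.inr ()) * b i := by
  simp [homogenization, mulVec, dotProduct, sub_eq_add_neg, mul_comm]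

lemma homogenization_mulVec_inr [Fintype n] (x : n ⊕ Unit → R) :
    (homogenization A b *ᵥ x) (Sum.inr ()) = x (Sum.inr ()) := by
  simp [homogenization, fromBlocks_mulVec]

lemma homogenization_transpose_mulVec_comp_inl [Fintype m] (y : m ⊕ Unit → R) :
    ((homogenization A b)ᵀ *ᵥ y) ∘ Sum.inl = Aᵀ *ᵥ (y ∘ Sum.inl) := by
  simp [homogenization, fromBlocks_transpose, fromBlocks_mulVec]

lemma homogenization_transpose_mulVec_inr [Fintype m] (y : m ⊕ Unit → R) :
    ((homogenization A b)ᵀ *ᵥ y) (Sum.inr ()) = y (Sum.inr ()) - b ⬝ᵥ (y ∘ Sum.inl) := by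
  simp [homogenization, mulVec, dotProduct, sub_eq_add_neg, add_comm]

end Homogenization

lemma sumElim_dotProduct {R n : Type*} [CommRing R] [Fintype n] (γ : n → R) (c : R)
    (x : n ⊕ Unit → R) :
    Sum.elim γ (fun _ => c) ⬝ᵥ x = γ ⬝ᵥ (x ∘ Sum.inl) + c * x (Sum.inr ()) := by
  simp [dotProduct, Fintype.sum_sum_type]

section Polyhedron

variable {m n : Type*} [Fintype n] {A : Matrix m n ℝ} {b : m → ℝ} {γ : n → ℝ} {γ0 : ℝ}

lemma nonneg_dotProduct_of_mulVec_nonneg (hfeas : ∃ u, b ≤ A *ᵥ u)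
    (hval : ∀ u, b ≤ A *ᵥ u → γ0 ≤ γ ⬝ᵥ u) {d : n → ℝ} (hd : 0 ≤ A *ᵥ d) : 0 ≤ γ ⬝ᵥ d := by
  obtain ⟨u, hu⟩ := hfeas
  by_contra! hneg
  -- walking from `u` along the recession direction `d` drives `γ ⬝ᵥ ·` below `γ0`
  set t := (γ ⬝ᵥ u - γ0 + 1) / -(γ ⬝ᵥ d)
  have ht : 0 ≤ t := div_nonneg (by linarith [hval u hu]) (by linarith)
  have hvalt := hval (u + t • d) <| by
    rw [mulVec_add, mulVec_smul]
    exact le_add_of_le_of_nonneg hu (smul_nonneg ht hd)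
  have htd : t * (γ ⬝ᵥ d) = -(γ ⬝ᵥ u - γ0 + 1) := by
    have : γ ⬝ᵥ d ≠ 0 := hneg.ne
    simp only [t]
    field_simp
  rw [dotProduct_add, dotProduct_smul, smul_eq_mul, htd] at hvalt
  linarith

lemma mul_le_dotProduct_of_smul_le_mulVec (hfeas : ∃ u, b ≤ A *ᵥ u)
    (hval : ∀ u, b ≤ A *ᵥ u → γ0 ≤ γ ⬝ᵥ u) {u : n → ℝ} {t : ℝ} (ht : 0 ≤ t)
    (hu : t • b ≤ A *ᵥ u) : t * γ0 ≤ γ ⬝ᵥ u := by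
  rcases ht.eq_or_lt with rfl | ht
  · simpa using nonneg_dotProduct_of_mulVec_nonneg hfeas hval (by simpa using hu)
  · have := hval (t⁻¹ • u) (by rwa [mulVec_smul, le_inv_smul_iff_of_pos ht])
    rwa [dotProduct_smul, smul_eq_mul, le_inv_mul_iff₀ ht] at this

variable [Fintype m]

theorem le_dotProduct_of_nonneg_transpose_mulVec_eq {β : m → ℝ} (hβ : 0 ≤ β) (hA : Aᵀ *ᵥ β = γ)
    (hb : γ0 ≤ b ⬝ᵥ β) {u : n → ℝ} (hu : b ≤ A *ᵥ u) : γ0 ≤ γ ⬝ᵥ u :=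
  calc γ0 ≤ b ⬝ᵥ β := hb
    _ ≤ (A *ᵥ u) ⬝ᵥ β := dotProduct_le_dotProduct_of_nonneg_right hu hβ
    _ = γ ⬝ᵥ u := by rw [← hA, mulVec_transpose, dotProduct_comm, dotProduct_mulVec]

theorem exists_nonneg_transpose_mulVec_eq_of_forall_le_dotProduct (hfeas : ∃ u, b ≤ A *ᵥ u)
    (hval : ∀ u, b ≤ A *ᵥ u → γ0 ≤ γ ⬝ᵥ u) :
    ∃ β, 0 ≤ β ∧ Aᵀ *ᵥ β = γ ∧ γ0 ≤ b ⬝ᵥ β := by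
  have hH : ∀ x, 0 ≤ homogenization A b *ᵥ x → 0 ≤ Sum.elim γ (fun _ => -γ0) ⬝ᵥ x := by
    intro x hx
    have ht : 0 ≤ x (Sum.inr ()) := homogenization_mulVec_inr A b x ▸ hx (Sum.inr ())
    have hu : x (Sum.inr ()) • b ≤ A *ᵥ (x ∘ Sum.inl) := fun i => by
      have := hx (Sum.inl i)
      rw [Pi.zero_apply, homogenization_mulVec_inl] at this
      rw [Pi.smul_apply, smul_eq_mul]
      linarith
    rw [sumElim_dotProduct]
    linarith [mul_le_dotProduct_of_smul_le_mulVec hfeas hval ht hu]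
  obtain ⟨y, hy, hyH⟩ := (homogenization A b).exists_nonneg_transpose_mulVec_eq _ hH
  refine ⟨y ∘ Sum.inl, fun i => hy _, ?_, ?_⟩
  · rw [← homogenization_transpose_mulVec_comp_inl, hyH, Sum.elim_comp_inl]
  · have := congrFun hyH (Sum.inr ())
    rw [homogenization_transpose_mulVec_inr, Sum.elim_inr] at this
    linarith [show 0 ≤ y (Sum.inr ()) from hy _]

end Polyhedron

/-- Balas' characterization: an inequality `γᵀu ≥ γ₀` is valid for the union of two
nonempty polyhedra `P₁ = {u : A¹u ≥ b¹}`, `P₂ = {u : A²u ≥ b²}` iff there are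
nonnegative multipliers `β¹, β²` with `(Aʳ)ᵀβʳ = γ` and `(bʳ)ᵀβʳ ≥ γ₀`. -/
theorem disjunctive_valid_inequality_characterization
    (n m₁ m₂ : ℕ)
    (A1 : Matrix (Fin m₁) (Fin n) ℝ) (A2 : Matrix (Fin m₂) (Fin n) ℝ)
    (b1 : Fin m₁ → ℝ) (b2 : Fin m₂ → ℝ)
    (hP1 : ∃ u : Fin n → ℝ, ∀ i, b1 i ≤ (A1 *ᵥ u) i)
    (hP2 : ∃ u : Fin n → ℝ, ∀ i, b2 i ≤ (A2 *ᵥ u) i)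
    (γ : Fin n → ℝ) (γ0 : ℝ) :
    (∀ u : Fin n → ℝ,
        ((∀ i, b1 i ≤ (A1 *ᵥ u) i) ∨ (∀ i, b2 i ≤ (A2 *ᵥ u) i)) → γ0 ≤ γ ⬝ᵥ u) ↔
    (∃ (β1 : Fin m₁ → ℝ) (β2 : Fin m₂ → ℝ),
        (∀ i, 0 ≤ β1 i) ∧ (∀ i, 0 ≤ β2 i) ∧
        A1ᵀ *ᵥ β1 = γ ∧ A2ᵀ *ᵥ β2 = γ ∧
        γ0 ≤ b1 ⬝ᵥ β1 ∧ γ0 ≤ b2 ⬝ᵥ β2) := by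
  constructor
  · intro hvalid
    obtain ⟨β1, hβ1, hA1, hb1⟩ := exists_nonneg_transpose_mulVec_eq_of_forall_le_dotProduct hP1
      fun u hu => hvalid u (Or.inl hu)
    obtain ⟨β2, hβ2, hA2, hb2⟩ := exists_nonneg_transpose_mulVec_eq_of_forall_le_dotProduct hP2
      fun u hu => hvalid u (Or.inr hu)
    exact ⟨β1, β2, hβ1, hβ2, hA1, hA2, hb1, hb2⟩
  · rintro ⟨β1, β2, hβ1, hβ2, hA1, hA2, hb1, hb2⟩ u (hu | hu)
    exacts [le_dotProduct_of_nonneg_transpose_mulVec_eq hβ1 hA1 hb1 hu,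
      le_dotProduct_of_nonneg_transpose_mulVec_eq hβ2 hA2 hb2 hu]
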